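/- arXiv:1304.4658 — 7 statements merged into one kernel-verified Lean document; each statement's English description precedes it below -/
import Mathlib

section
/- Suppose π : V × V → ℝ satisfies the PageRank recurrence π(u,v) = (1-α)·(1/|out(u)|)·Σ_{w ∈ out(u)} π(w,v) + α·[u=v], and suppose s, p : V → ℝ satisfy s(u) = (1-α)·(1/|out(u)|)·Σ_{w ∈ out(u)} (s(w) - p(w)) + α·[u=v] for all u, with 0 ≤ p(w) < α·ε for all w. Then |s(u) - π(u,v)| ≤ (1-α)·ε < ε for all u ∈ V. -/
/-!
The error `e = s - π(·, v)` satisfies `e(u) = (1 - α) · avg_{w ∈ out u} (e(w) - p(w))`, since the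
teleport terms cancel. Taking `u` where `|e|` is maximal, with maximum `M`, gives
`M ≤ (1 - α) (M + α ε)`, i.e. `α M ≤ (1 - α) α ε`.
-/

namespace PageRank

variable {V : Type*}

/-- Zero, not undefined, when `out u` is empty, since `0⁻¹ = 0`. -/
noncomputable def walkAvg (out : V → Finset V) (f : V → ℝ) (u : V) : ℝ :=
  ((out u).card : ℝ)⁻¹ * ∑ w ∈ out u, f w

theorem walkAvg_sub (out : V → Finset V) (f g : V → ℝ) (u : V) :
    walkAvg out (fun w => f w - g w) u = walkAvg out f u - walkAvg out g u := by
  simp only [walkAvg, Finset.sum_sub_distrib, mul_sub]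

theorem abs_walkAvg_le (out : V → Finset V) {f : V → ℝ} {B : ℝ} (hf : ∀ w, |f w| ≤ B) (u : V) :
    |walkAvg out f u| ≤ B := by
  rcases (out u).eq_empty_or_nonempty with hempty | hne
  · simpa [walkAvg, hempty] using (abs_nonneg (f u)).trans (hf u)
  have hcard : (0 : ℝ) < (out u).card := by exact_mod_cast hne.card_pos
  have hsum : |∑ w ∈ out u, f w| ≤ (out u).card * B :=
    calc |∑ w ∈ out u, f w| ≤ ∑ w ∈ out u, |f w| := Finset.abs_sum_le_sum_abs _ _
      _ ≤ (out u).card • B := Finset.sum_le_card_nsmul _ _ _ fun w _ => hf w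
      _ = (out u).card * B := nsmul_eq_mul _ _
  rw [walkAvg, abs_mul, abs_of_pos (inv_pos.mpr hcard), inv_mul_le_iff₀ hcard]
  exact hsum

theorem abs_le_div_of_abs_le_mul_add [Finite V] {e : V → ℝ} {c δ : ℝ} (hc : c < 1)
    (h : ∀ B, (∀ w, |e w| ≤ B) → ∀ u, |e u| ≤ c * (B + δ)) (u : V) :
    |e u| ≤ c * δ / (1 - c) := by
  have : Nonempty V := ⟨u⟩
  obtain ⟨u₀, hmax⟩ := Finite.exists_max fun w => |e w|
  have hM := h _ hmax u₀
  calc |e u| ≤ |e u₀| := hmax u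
    _ ≤ c * δ / (1 - c) := by rw [le_div_iff₀ (by linarith)]; linarith

theorem sub_eq_mul_walkAvg {out : V → Finset V} {c : ℝ} {x y p b : V → ℝ}
    (hx : ∀ u, x u = c * walkAvg out x u + b u)
    (hy : ∀ u, y u = c * walkAvg out (fun w => y w - p w) u + b u) (u : V) :
    y u - x u = c * walkAvg out (fun w => (y w - x w) - p w) u := by
  simp only [sub_right_comm _ (x _)]
  rw [walkAvg_sub, hx u, hy u]
  ring

theorem abs_sub_le_of_perturbed_fixedPoint [Finite V] {out : V → Finset V} {c δ : ℝ}
    {x y p b : V → ℝ} (hc₀ : 0 ≤ c) (hc₁ : c < 1)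
    (hx : ∀ u, x u = c * walkAvg out x u + b u)
    (hy : ∀ u, y u = c * walkAvg out (fun w => y w - p w) u + b u)
    (hp : ∀ w, |p w| ≤ δ) (u : V) :
    |y u - x u| ≤ c * δ / (1 - c) := by
  refine abs_le_div_of_abs_le_mul_add (e := fun w => y w - x w) hc₁ (fun B hB u => ?_) u
  rw [sub_eq_mul_walkAvg hx hy, abs_mul, abs_of_nonneg hc₀]
  refine mul_le_mul_of_nonneg_left (abs_walkAvg_le out (fun w => ?_) u) hc₀
  exact (abs_sub _ _).trans (add_le_add (hB w) (hp w))

end PageRank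

open PageRank in
theorem priority_queue_correctness_general
    {V : Type*} [Fintype V] [DecidableEq V]
    (out : V → Finset V)
    (α : ℝ) (hα : 0 < α) (hα1 : α < 1)
    (ε : ℝ) (hε : 0 < ε)
    (v : V) (π : V → V → ℝ) (s p : V → ℝ)
    (hπ : ∀ u, π u v =
      (1 - α) * (((out u).card : ℝ)⁻¹ * ∑ w ∈ out u, π w v)
        + (if u = v then α else 0))
    (hs : ∀ u, s u =
      (1 - α) * (((out u).card : ℝ)⁻¹ * ∑ w ∈ out u, (s w - p w))
        + (if u = v then α else 0))
    (hp : ∀ w, 0 ≤ p w ∧ p w < α * ε) :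
    (∀ u, |s u - π u v| ≤ (1 - α) * ε) ∧ (1 - α) * ε < ε := by
  have hp' : ∀ w, |p w| ≤ α * ε := fun w => by rw [abs_of_nonneg (hp w).1]; exact (hp w).2.le
  refine ⟨fun u => ?_, by nlinarith⟩
  calc |s u - π u v| ≤ (1 - α) * (α * ε) / (1 - (1 - α)) :=
        abs_sub_le_of_perturbed_fixedPoint (x := fun w => π w v) (b := fun w => if w = v then α else 0)
          (by linarith) (by linarith) hπ hs hp' u
    _ = (1 - α) * ε := by rw [sub_sub_cancel]; field_simp

/-- Correctness of the priority queue algorithm: if `π` satisfies the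
PageRank recurrence, and at termination the score vector `s` and residual vector `p`
satisfy the perturbed recurrence with all residuals in `[0, α·ε)`, then every score has
additive error at most `(1-α)·ε < ε`. -/
theorem priority_queue_correctness
    {V : Type*} [Fintype V] [Nonempty V] [DecidableEq V]
    (out : V → Finset V) (hout : ∀ u, (out u).Nonempty)
    (α : ℝ) (hα : 0 < α) (hα1 : α < 1)
    (ε : ℝ) (hε : 0 < ε)
    (v : V) (π : V → V → ℝ) (s p : V → ℝ)
    (hπ : ∀ u, π u v =
      (1 - α) * (((out u).card : ℝ)⁻¹ * ∑ w ∈ out u, π w v)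
        + (if u = v then α else 0))
    (hs : ∀ u, s u =
      (1 - α) * (((out u).card : ℝ)⁻¹ * ∑ w ∈ out u, (s w - p w))
        + (if u = v then α else 0))
    (hp : ∀ w, 0 ≤ p w ∧ p w < α * ε) :
    (∀ u, |s u - π u v| ≤ (1 - α) * ε) ∧ (1 - α) * ε < ε :=
  priority_queue_correctness_general out α hα hα1 ε hε v π s p hπ hs hp
end

section
/- Let E = max_{u ∈ V} |π(u,v) - s(u)| where s satisfies the perturbed recurrence with residuals p(w) satisfying 0 ≤ p(w) < δ. Then E satisfies E ≤ (1-α)E + (1-α)δ, and hence E ≤ ((1-α)/α)·δ. -/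
/-!
The error `e u = π(u,v) - s(u)` satisfies `e u = (1-α)·avg_{w ∈ out u} (e w + p w)`, since the
restart terms `α·[u = v]` cancel. An average of quantities bounded in absolute value by
`E + δ` is itself so bounded, which gives `E ≤ (1-α)(E + δ)`.
-/

open Finset

theorem abs_inv_card_mul_sum_le {ι : Type*} (s : Finset ι) {f : ι → ℝ} {M : ℝ} (hM : 0 ≤ M)
    (h : ∀ i ∈ s, |f i| ≤ M) : |(#s : ℝ)⁻¹ * ∑ i ∈ s, f i| ≤ M := by
  rcases s.eq_empty_or_nonempty with rfl | hs
  · simpa using hM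
  have hcard : (0 : ℝ) < #s := by exact_mod_cast hs.card_pos
  rw [abs_mul, abs_inv, Nat.abs_cast, inv_mul_le_iff₀ hcard, ← nsmul_eq_mul]
  exact (abs_sum_le_sum_abs _ _).trans (sum_le_card_nsmul _ _ _ h)

theorem sup'_abs_le_mul_add_of_eq_mul_average {V : Type*} [Fintype V] [Nonempty V]
    (out : V → Finset V) {c δ : ℝ} (hc : 0 ≤ c) {e p : V → ℝ}
    (he : ∀ u, e u = c * ((#(out u) : ℝ)⁻¹ * ∑ w ∈ out u, (e w + p w)))
    (hp : ∀ w, |p w| ≤ δ) :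
    univ.sup' univ_nonempty (fun u => |e u|) ≤
      c * (univ.sup' univ_nonempty (fun u => |e u|) + δ) := by
  set E := univ.sup' univ_nonempty (fun u => |e u|)
  have hle_E : ∀ w, |e w| ≤ E := fun w => le_sup' (fun u => |e u|) (mem_univ w)
  obtain ⟨w₀⟩ := ‹Nonempty V›
  have hEδ : 0 ≤ E + δ :=
    add_nonneg ((abs_nonneg _).trans (hle_E w₀)) ((abs_nonneg _).trans (hp w₀))
  refine sup'_le _ _ fun u _ => ?_
  rw [he u, abs_mul, abs_of_nonneg hc]
  refine mul_le_mul_of_nonneg_left (abs_inv_card_mul_sum_le _ hEδ fun w _ => ?_) hc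
  exact (abs_add_le _ _).trans (add_le_add (hle_E w) (hp w))

theorem error_contraction_bound_general
    {V : Type*} [Fintype V] [Nonempty V] [DecidableEq V]
    (out : V → Finset V)
    (α : ℝ) (hα : 0 < α) (hα1 : α < 1)
    (δ : ℝ)
    (v : V) (π : V → V → ℝ) (s p : V → ℝ)
    (hπ : ∀ u, π u v =
      (1 - α) * (((out u).card : ℝ)⁻¹ * ∑ w ∈ out u, π w v)
        + (if u = v then α else 0))
    (hs : ∀ u, s u =
      (1 - α) * (((out u).card : ℝ)⁻¹ * ∑ w ∈ out u, (s w - p w))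
        + (if u = v then α else 0))
    (hp : ∀ w, 0 ≤ p w ∧ p w < δ)
    (E : ℝ)
    (hE : E = Finset.univ.sup' Finset.univ_nonempty (fun u => |π u v - s u|)) :
    E ≤ (1 - α) * E + (1 - α) * δ ∧ E ≤ ((1 - α) / α) * δ := by
  have herr : ∀ u, π u v - s u =
      (1 - α) * ((#(out u) : ℝ)⁻¹ * ∑ w ∈ out u, (π w v - s w + p w)) := fun u => by
    rw [hπ u, hs u, sum_add_distrib, sum_sub_distrib, sum_sub_distrib]
    ring
  have hp_abs : ∀ w, |p w| ≤ δ := fun w => by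
    rw [abs_of_nonneg (hp w).1]
    exact (hp w).2.le
  have hcontr : E ≤ (1 - α) * E + (1 - α) * δ := by
    rw [← mul_add, hE]
    exact sup'_abs_le_mul_add_of_eq_mul_average out (by linarith) herr hp_abs
  refine ⟨hcontr, ?_⟩
  rw [div_mul_eq_mul_div, le_div_iff₀ hα]
  linarith

/-- Let `E = max_u |π(u,v) - s(u)|` where `s` satisfies the perturbed
recurrence with residuals `0 ≤ p(w) < δ`. Then `E ≤ (1-α)·E + (1-α)·δ`, and hence
`E ≤ ((1-α)/α)·δ`. -/
theorem error_contraction_bound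
    {V : Type*} [Fintype V] [Nonempty V] [DecidableEq V]
    (out : V → Finset V) (hout : ∀ u, (out u).Nonempty)
    (α : ℝ) (hα : 0 < α) (hα1 : α < 1)
    (δ : ℝ) (hδ : 0 < δ)
    (v : V) (π : V → V → ℝ) (s p : V → ℝ)
    (hπ : ∀ u, π u v =
      (1 - α) * (((out u).card : ℝ)⁻¹ * ∑ w ∈ out u, π w v)
        + (if u = v then α else 0))
    (hs : ∀ u, s u =
      (1 - α) * (((out u).card : ℝ)⁻¹ * ∑ w ∈ out u, (s w - p w))
        + (if u = v then α else 0))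
    (hp : ∀ w, 0 ≤ p w ∧ p w < δ)
    (E : ℝ)
    (hE : E = Finset.univ.sup' Finset.univ_nonempty (fun u => |π u v - s u|)) :
    E ≤ (1 - α) * E + (1 - α) * δ ∧ E ≤ ((1 - α) / α) * δ :=
  error_contraction_bound_general out α hα hα1 δ v π s p hπ hs hp E hE
end

section
/- If cost(u,v) = ⌊π(u,v)/(α·ε)⌋·(|in(u)| + log n) bounds the work attributable to node u when the target is v, then the total work summed over all targets v ∈ V is at most (1/(α·ε))·(m + n·log n), where m = Σ_u |in(u)| is the number of edges. Hence for a uniformly random target v, the expected work is at most (1/(α·ε))·(m/n + log n). -/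
open Finset

/-- If `cost(u,v) = ⌊π(u,v)/(α·ε)⌋·(|in(u)| + log n)` bounds the work
attributable to node `u` when the target is `v`, then the total work over all targets
`v` is at most `(1/(α·ε))·(m + n·log n)` where `m = Σ_u |in(u)|`; hence for a uniformly
random target the expected work is at most `(1/(α·ε))·(m/n + log n)`. -/
theorem average_case_running_time
    {V : Type*} [Fintype V] [Nonempty V]
    (indeg : V → ℕ)  -- |in(u)|
    (π : V → V → ℝ)
    (hπ0 : ∀ u v, 0 ≤ π u v)
    (hπ1 : ∀ u, ∑ v : V, π u v = 1)
    (α ε : ℝ) (hαε : 0 < α * ε)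
    (n m : ℝ) (hn : n = (Fintype.card V : ℝ)) (hm : m = ∑ u : V, (indeg u : ℝ))
    (cost : V → V → ℝ)
    (hcost : ∀ u v, cost u v =
      (⌊π u v / (α * ε)⌋₊ : ℝ) * ((indeg u : ℝ) + Real.log n)) :
    (∑ v : V, ∑ u : V, cost u v) ≤ (1 / (α * ε)) * (m + n * Real.log n) ∧
    (1 / n) * (∑ v : V, ∑ u : V, cost u v) ≤ (1 / (α * ε)) * (m / n + Real.log n) := by
  have hn1 : (1:ℝ) ≤ n := by
    rw [hn]; exact_mod_cast Fintype.card_pos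
  have hnpos : (0:ℝ) < n := lt_of_lt_of_le one_pos hn1
  have hlog : 0 ≤ Real.log n := Real.log_nonneg hn1
  have key : (∑ v : V, ∑ u : V, cost u v) ≤ (1 / (α * ε)) * (m + n * Real.log n) := by
    rw [Finset.sum_comm]
    have hub : ∀ u : V, ∑ v : V, cost u v ≤ (1/(α*ε)) * ((indeg u : ℝ) + Real.log n) := by
      intro u
      have : ∑ v : V, cost u v ≤ ∑ v : V, (π u v / (α*ε)) * ((indeg u : ℝ) + Real.log n) := by
        apply Finset.sum_le_sum
        intro v _
        rw [hcost]
        apply mul_le_mul_of_nonneg_right (Nat.floor_le (div_nonneg (hπ0 u v) hαε.le))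
        exact add_nonneg (Nat.cast_nonneg _) hlog
      calc _ ≤ _ := this
        _ = (1/(α*ε)) * ((indeg u : ℝ) + Real.log n) := by
            rw [← Finset.sum_mul]
            congr 1
            rw [← Finset.sum_div, hπ1, one_div]
    calc ∑ u : V, ∑ v : V, cost u v
        ≤ ∑ u : V, (1/(α*ε)) * ((indeg u : ℝ) + Real.log n) := Finset.sum_le_sum (fun u _ => hub u)
      _ = (1 / (α * ε)) * (m + n * Real.log n) := by
          rw [← Finset.mul_sum, Finset.sum_add_distrib, Finset.sum_const, hm, hn]
          simp [nsmul_eq_mul]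
  refine ⟨key, ?_⟩
  have := mul_le_mul_of_nonneg_left key (le_of_lt (one_div_pos.mpr hnpos))
  calc (1 / n) * (∑ v : V, ∑ u : V, cost u v) ≤ (1/n) * ((1 / (α * ε)) * (m + n * Real.log n)) := this
    _ = (1 / (α * ε)) * (m / n + Real.log n) := by field_simp
end

section
/- Divide the execution of the priority queue algorithm into stages i = 1, …, ⌈log₂(1/(αε))⌉, where stage i ends when all priorities are below 2^{-i}. If after stage i every node's score error satisfies |s(u) - π(u,v)| ≤ 2^{-i}/α, and each pop of node u in stage i+1 decreases |s(u) - π(u,v)| by at least 2^{-(i+1)}, then each node is popped at most 2/α times per stage, and the total work is O((D_v(αε)/α)·log(1/(αε))), where D_v(x) = Σ_{u: π(u,v) > x} (|in(u)| + log n). -/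
open Finset

/-- Divide the run into stages `i = 1, …, S = ⌈log₂(1/(αε))⌉`, stage `i`
ending when all priorities are below `2^{-i}`.  If after stage `i` every score error is
at most `2^{-i}/α`, and each pop in stage `i+1` decreases the error by at least
`2^{-(i+1)}` (so the pops in stage `i+1` consume at most the error after stage `i`),
and only nodes with `π(u,v) > αε` are ever popped, then each node is popped at most
`2/α` times per stage and the total work is at most `(2/α)·D_v(αε)·⌈log₂(1/(αε))⌉`,
where `D_v(x) = Σ_{u : π(u,v) > x} (|in(u)| + log n)`. -/
theorem parameterized_running_time
    {V : Type*} [Fintype V]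
    (indeg : V → ℕ) (n : ℝ) (hn : n = (Fintype.card V : ℝ))
    (α ε : ℝ) (hα : 0 < α) (hα1 : α < 1) (hε : 0 < ε)
    (v : V) (π : V → V → ℝ)
    (pops : ℕ → V → ℕ)  -- number of pops of each node in each stage
    (err : ℕ → V → ℝ)   -- score error of each node at the end of each stage
    (herr : ∀ i u, err i u ≤ (2 : ℝ)⁻¹ ^ i / α)
    (hdec : ∀ i u, (pops (i + 1) u : ℝ) * (2 : ℝ)⁻¹ ^ (i + 1) ≤ err i u)
    (hpopped : ∀ i u, pops i u ≠ 0 → π u v > α * ε)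
    (S : ℕ) (hS : S = ⌈Real.logb 2 (1 / (α * ε))⌉₊)
    (D : ℝ)
    (hD : D = ∑ u ∈ Finset.univ.filter (fun u => π u v > α * ε),
      ((indeg u : ℝ) + Real.log n)) :
    (∀ i u, (pops (i + 1) u : ℝ) ≤ 2 / α) ∧
    (∑ i ∈ Finset.range S, ∑ u : V,
        (pops (i + 1) u : ℝ) * ((indeg u : ℝ) + Real.log n))
      ≤ (2 / α) * D * S := by
  have hw : ∀ u : V, (0:ℝ) ≤ (indeg u : ℝ) + Real.log n := by
    intro u
    have hln : (0:ℝ) ≤ Real.log n := by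
      rw [hn]; exact Real.log_natCast_nonneg _
    positivity
  have h1 : ∀ i u, (pops (i + 1) u : ℝ) ≤ 2 / α := by
    intro i u
    have h := (hdec i u).trans (herr i u)
    have hp : (0:ℝ) < (2:ℝ)⁻¹ ^ (i+1) := by positivity
    have h2 : (pops (i+1) u : ℝ) ≤ ((2:ℝ)⁻¹ ^ i / α) / (2:ℝ)⁻¹ ^ (i+1) :=
      (le_div_iff₀ hp).mpr h
    have heq : ((2:ℝ)⁻¹ ^ i / α) / (2:ℝ)⁻¹ ^ (i+1) = 2/α := by
      rw [pow_succ]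
      have hpi : ((2:ℝ)⁻¹ ^ i) ≠ 0 := by positivity
      field_simp
    rwa [heq] at h2
  have hstage : ∀ i, ∑ u : V, (pops (i+1) u : ℝ) * ((indeg u:ℝ) + Real.log n)
      ≤ (2/α) * D := by
    intro i
    rw [hD, Finset.mul_sum,
      ← Finset.sum_filter_add_sum_filter_not Finset.univ (fun u => π u v > α * ε)
        (fun u => (pops (i+1) u : ℝ) * ((indeg u:ℝ) + Real.log n))]
    have hz : ∑ u ∈ Finset.univ.filter (fun u => ¬ π u v > α * ε),
        (pops (i+1) u : ℝ) * ((indeg u:ℝ) + Real.log n) = 0 := by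
      apply Finset.sum_eq_zero
      intro u hu
      have : pops (i+1) u = 0 := by
        by_contra h
        exact (Finset.mem_filter.mp hu).2 (hpopped _ u h)
      simp [this]
    rw [hz, add_zero]
    apply Finset.sum_le_sum
    intro u hu
    exact mul_le_mul_of_nonneg_right (h1 i u) (hw u)
  refine ⟨h1, ?_⟩
  calc ∑ i ∈ Finset.range S, ∑ u : V,
        (pops (i + 1) u : ℝ) * ((indeg u : ℝ) + Real.log n)
      ≤ ∑ i ∈ Finset.range S, (2/α) * D :=
        Finset.sum_le_sum fun i _ => hstage i
    _ = (2/α) * D * S := by rw [Finset.sum_const, Finset.card_range]; ring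
end

section
/- Under the power-law assumption with exponent β ∈ (0,1), the total running time of the priority queue algorithm summed over all n target nodes, namely Σ_v Σ_u ⌊π(u,v)/(αε)⌋·|in(u)|, is at most c·n·(m/n^{1/β})·(1/(αε))^{1/β} for c = (1-β)^{(1/β)-1}, so the average per-target running time is O((m/n^{1/β})·(1/(αε))^{1/β}). -/
open Finset

/-!
For a fixed source `u` with `a = η/(αε)`, the term `⌊a·i^(-β)⌋` vanishes as soon as
`i > i* = a^(1/β)`, and below `i*` it is at most `a·i^(-β)`. Comparing with `∫₁^{i*} x^(-β) dx`
bounds the row sum by `a·(i*)^(1-β)/(1-β) = i*/(1-β)`, independently of `u`. Weighting by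
`|in(u)|` and summing over `u` gives `m·i*/(1-β)`, which is the claimed bound once
`η = (1-β)/n^(1-β)` is substituted.
-/

theorem sum_range_add_one_rpow_neg_le {β : ℝ} (hβ0 : 0 ≤ β) (hβ1 : β < 1) (K : ℕ) :
    ∑ j ∈ range K, ((j : ℝ) + 1) ^ (-β) ≤ (K : ℝ) ^ (1 - β) / (1 - β) := by
  have h1β : 0 < 1 - β := by linarith
  rcases K.eq_zero_or_pos with rfl | hK
  · simp [Real.zero_rpow h1β.ne']
  have hanti : AntitoneOn (fun x : ℝ => x ^ (-β)) (Set.Icc (1 : ℕ) K) := fun x hx y _ hxy =>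
    Real.rpow_le_rpow_of_nonpos (by linarith [hx.1, show ((1 : ℕ) : ℝ) = 1 from Nat.cast_one])
      hxy (by linarith)
  have hint : ∫ x in ((1 : ℕ) : ℝ)..K, x ^ (-β) = ((K : ℝ) ^ (1 - β) - 1) / (1 - β) := by
    rw [integral_rpow (Or.inl (by linarith))]
    simp [sub_eq_neg_add]
  -- the first term `1` is absorbed by `1 ≤ 1/(1-β)`; the rest is below `∫₁ᴷ x^(-β)`
  have htail := (AntitoneOn.sum_le_integral_Ico hK hanti).trans_eq hint
  rw [range_eq_Ico, sum_eq_sum_Ico_succ_bot hK]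
  push_cast at htail ⊢
  have hone : 1 ≤ 1 / (1 - β) := by rw [le_div_iff₀ h1β]; linarith
  have hsplit : (K : ℝ) ^ (1 - β) / (1 - β) = 1 / (1 - β) + ((K : ℝ) ^ (1 - β) - 1) / (1 - β) := by
    ring
  rw [zero_add, Real.one_rpow, hsplit]
  linarith

theorem floor_mul_rpow_neg_eq_zero {β a x : ℝ} (hβ : 0 < β) (ha : 0 ≤ a)
    (hx : a ^ (1 / β) < x) : ⌊a * x ^ (-β)⌋₊ = 0 := by
  have hx0 : 0 < x := (Real.rpow_nonneg ha _).trans_lt hx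
  have ha_lt : a < x ^ β := by
    calc a = (a ^ (1 / β)) ^ β := by rw [one_div, Real.rpow_inv_rpow ha hβ.ne']
      _ < x ^ β := Real.rpow_lt_rpow (Real.rpow_nonneg ha _) hx hβ
  rw [Nat.floor_eq_zero, Real.rpow_neg hx0.le, ← div_eq_mul_inv,
    div_lt_one (Real.rpow_pos_of_pos hx0 β)]
  exact ha_lt

theorem sum_range_floor_mul_add_one_rpow_neg_le {β a : ℝ} (hβ0 : 0 < β) (hβ1 : β < 1)
    (ha : 0 ≤ a) (N : ℕ) :
    ∑ i ∈ range N, (⌊a * ((i : ℝ) + 1) ^ (-β)⌋₊ : ℝ) ≤ a ^ (1 / β) / (1 - β) := by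
  set K := ⌊a ^ (1 / β)⌋₊
  have hvanish : ∀ i, K ≤ i → ⌊a * ((i : ℝ) + 1) ^ (-β)⌋₊ = 0 := fun i hi =>
    floor_mul_rpow_neg_eq_zero hβ0 ha <| (Nat.lt_floor_add_one _).trans_le (by gcongr)
  have hrpow : a * (a ^ (1 / β)) ^ (1 - β) = a ^ (1 / β) := by
    have hexp : 1 + 1 / β * (1 - β) = 1 / β := by field_simp; ring
    rw [← Real.rpow_mul ha, ← Real.rpow_one_add' ha (by rw [hexp]; positivity), hexp]
  calc ∑ i ∈ range N, (⌊a * ((i : ℝ) + 1) ^ (-β)⌋₊ : ℝ)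
      = ∑ i ∈ range N with i < K, (⌊a * ((i : ℝ) + 1) ^ (-β)⌋₊ : ℝ) := by
        refine (sum_filter_of_ne fun i _ hi => not_le.mp fun hiK => hi ?_).symm
        rw [hvanish i hiK, Nat.cast_zero]
    _ ≤ ∑ i ∈ range K, (⌊a * ((i : ℝ) + 1) ^ (-β)⌋₊ : ℝ) :=
        sum_le_sum_of_subset_of_nonneg (fun i hi => by simp_all) (fun _ _ _ => by positivity)
    _ ≤ ∑ i ∈ range K, a * ((i : ℝ) + 1) ^ (-β) :=
        sum_le_sum fun i _ => Nat.floor_le (by positivity)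
    _ ≤ a * ((K : ℝ) ^ (1 - β) / (1 - β)) := by
        rw [← mul_sum]; gcongr; exact sum_range_add_one_rpow_neg_le hβ0.le hβ1 K
    _ ≤ a * ((a ^ (1 / β)) ^ (1 - β) / (1 - β)) := by
        have : 0 < 1 - β := by linarith
        gcongr; exact Nat.floor_le (Real.rpow_nonneg ha _)
    _ = a ^ (1 / β) / (1 - β) := by rw [mul_div_assoc', hrpow]

theorem power_law_threshold_rpow_div_eq {β n A : ℝ} (hβ0 : 0 < β) (hβ1 : β < 1) (hn : 0 ≤ n)
    (hA : 0 ≤ A) :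
    ((1 - β) / n ^ (1 - β) / A) ^ (1 / β) / (1 - β)
      = (1 - β) ^ (1 / β - 1) * n / n ^ (1 / β) * (1 / A) ^ (1 / β) := by
  have h1β : 0 < 1 - β := by linarith
  rcases hn.eq_or_lt with rfl | hn
  · simp [Real.zero_rpow h1β.ne', Real.zero_rpow (inv_pos.mpr hβ0).ne']
  have hexp : (1 - β) * (1 / β) = 1 / β - 1 := by field_simp
  rw [show (1 - β) / n ^ (1 - β) / A = (1 - β) * ((n ^ (1 - β))⁻¹ * (1 / A)) by ring,
    Real.mul_rpow h1β.le (by positivity), Real.mul_rpow (by positivity) (by positivity),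
    Real.inv_rpow (by positivity), ← Real.rpow_mul hn.le, hexp, Real.rpow_sub_one hn.ne',
    Real.rpow_sub_one h1β.ne']
  field_simp

theorem power_law_average_running_time_general
    {V : Type*} [Fintype V]
    (β : ℝ) (hβ0 : 0 < β) (hβ1 : β < 1)
    (n : ℝ) (hn : n = (Fintype.card V : ℝ))
    (indeg : V → ℕ) (m : ℝ) (hm : m = ∑ u : V, (indeg u : ℝ))
    (η : ℝ) (hη : η = (1 - β) / n ^ (1 - β))
    (α ε : ℝ) (hαε : 0 < α * ε)
    (π : V → V → ℝ)
    (ord : V → (V ≃ Fin (Fintype.card V)))  -- sorting of targets for each source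
    (hpow : ∀ u v, π u v = η * (((ord u v : ℕ) : ℝ) + 1) ^ (-β))
    (c : ℝ) (hc : c = (1 - β) ^ (1 / β - 1)) :
    ∑ v : V, ∑ u : V, (⌊π u v / (α * ε)⌋₊ : ℝ) * (indeg u : ℝ)
      ≤ c * n * (m / n ^ (1 / β)) * (1 / (α * ε)) ^ (1 / β) := by
  have hn0 : 0 ≤ n := hn ▸ Nat.cast_nonneg _
  have hη0 : 0 ≤ η := hη ▸ by positivity
  have hsource (u : V) :
      ∑ v, (⌊π u v / (α * ε)⌋₊ : ℝ) ≤ (η / (α * ε)) ^ (1 / β) / (1 - β) :=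
    calc ∑ v, (⌊π u v / (α * ε)⌋₊ : ℝ)
        = ∑ i ∈ range (Fintype.card V), (⌊η / (α * ε) * ((i : ℝ) + 1) ^ (-β)⌋₊ : ℝ) := by
          rw [← Fin.sum_univ_eq_sum_range, ← (ord u).sum_comp]
          simp only [hpow, div_mul_eq_mul_div]
      _ ≤ _ := sum_range_floor_mul_add_one_rpow_neg_le hβ0 hβ1 (div_nonneg hη0 hαε.le) _
  calc ∑ v, ∑ u, (⌊π u v / (α * ε)⌋₊ : ℝ) * (indeg u : ℝ)
      = ∑ u, (∑ v, (⌊π u v / (α * ε)⌋₊ : ℝ)) * (indeg u : ℝ) := by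
        rw [sum_comm]; simp only [sum_mul]
    _ ≤ ∑ u, (η / (α * ε)) ^ (1 / β) / (1 - β) * (indeg u : ℝ) := by
        gcongr with u; exact hsource u
    _ = c * n * (m / n ^ (1 / β)) * (1 / (α * ε)) ^ (1 / β) := by
        rw [← mul_sum, ← hm, hη, power_law_threshold_rpow_div_eq hβ0 hβ1 hn0 hαε.le, hc]
        ring

/-- Under the power-law assumption with exponent `β ∈ (0,1)` (for each
source `u` the values `π(u,·)`, sorted decreasingly, equal `η·i^{-β}` with
`η = (1-β)/n^{1-β}`), the total running time summed over all `n` targets,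
`Σ_v Σ_u ⌊π(u,v)/(αε)⌋·|in(u)|`, is at most `c·n·(m/n^{1/β})·(1/(αε))^{1/β}` with
`c = (1-β)^{(1/β)-1}`; hence the average per-target running time is
`O((m/n^{1/β})·(1/(αε))^{1/β})`. -/
theorem power_law_average_running_time
    {V : Type*} [Fintype V] [Nonempty V]
    (β : ℝ) (hβ0 : 0 < β) (hβ1 : β < 1)
    (n : ℝ) (hn : n = (Fintype.card V : ℝ))
    (indeg : V → ℕ) (m : ℝ) (hm : m = ∑ u : V, (indeg u : ℝ))
    (η : ℝ) (hη : η = (1 - β) / n ^ (1 - β))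
    (α ε : ℝ) (hαε : 0 < α * ε)
    (π : V → V → ℝ)
    (ord : V → (V ≃ Fin (Fintype.card V)))  -- sorting of targets for each source
    (hpow : ∀ u v, π u v = η * (((ord u v : ℕ) : ℝ) + 1) ^ (-β))
    (c : ℝ) (hc : c = (1 - β) ^ (1 / β - 1)) :
    ∑ v : V, ∑ u : V, (⌊π u v / (α * ε)⌋₊ : ℝ) * (indeg u : ℝ)
      ≤ c * n * (m / n ^ (1 / β)) * (1 / (α * ε)) ^ (1 / β) :=
  power_law_average_running_time_general β hβ0 hβ1 n hn indeg m hm η hη α ε hαε π ord hpow c hc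
end

section
/- In the weighted-graph generalization, if s satisfies s(u) = (1-α)·(1/W(u))·Σ_{w∈out(u)} weight(u,w)·(s(w) - p(w)) + α·[u=v] with 0 ≤ p(w) < αε for all w, and π satisfies the corresponding exact recurrence π(u,v) = (1-α)·(1/W(u))·Σ_{w∈out(u)} weight(u,w)·π(w,v) + α·[u=v], then max_u |s(u) - π(u,v)| ≤ (1-α)·ε. -/
/-!
The error `d u = s u - π u v` satisfies the recurrence of `s` with the `α·[u = v]` term removed,
so it is `(1 - α)` times a weighted average of `d w - p w`. At a vertex where `|d|` is maximal,
with maximum `M`, this gives `M ≤ (1 - α) (M + α ε)`, that is `α M ≤ (1 - α) α ε`.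
-/

open Finset

/-- Holds also when the weights sum to `0`, since then `W⁻¹ = 0`. -/
theorem abs_inv_mul_sum_mul_le {ι : Type*} (t : Finset ι) (a g : ι → ℝ)
    (ha : ∀ i ∈ t, 0 ≤ a i) {B : ℝ} (hB : 0 ≤ B) (hg : ∀ i ∈ t, |g i| ≤ B) :
    |(∑ i ∈ t, a i)⁻¹ * ∑ i ∈ t, a i * g i| ≤ B := by
  have hA : 0 ≤ ∑ i ∈ t, a i := sum_nonneg ha
  have hsum : |∑ i ∈ t, a i * g i| ≤ (∑ i ∈ t, a i) * B := by
    rw [sum_mul]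
    refine (abs_sum_le_sum_abs _ _).trans (sum_le_sum fun i hi => ?_)
    rw [abs_mul, abs_of_nonneg (ha i hi)]
    exact mul_le_mul_of_nonneg_left (hg i hi) (ha i hi)
  rw [abs_mul, abs_of_nonneg (inv_nonneg.2 hA)]
  rcases hA.eq_or_lt with hA0 | hApos
  · simpa [← hA0] using hB
  · rw [inv_mul_le_iff₀ hApos]
    exact hsum

theorem one_sub_mul_abs_le_of_eq_mul_weighted_avg {V : Type*} [Fintype V]
    (out : V → Finset V) (weight : V → V → ℝ) (hw : ∀ u w, w ∈ out u → 0 ≤ weight u w)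
    (W : V → ℝ) (hW : ∀ u, W u = ∑ w ∈ out u, weight u w)
    {c δ : ℝ} (hc0 : 0 ≤ c) (hc1 : c ≤ 1) (d p : V → ℝ) (hp : ∀ w, |p w| ≤ δ)
    (hd : ∀ u, d u = c * ((W u)⁻¹ * ∑ w ∈ out u, weight u w * (d w - p w))) (u : V) :
    (1 - c) * |d u| ≤ c * δ := by
  obtain ⟨u₀, -, hmax⟩ := exists_max_image univ (fun w => |d w|) ⟨u, mem_univ u⟩
  have hδ : 0 ≤ δ := (abs_nonneg _).trans (hp u)
  have hM : |d u₀| ≤ c * (|d u₀| + δ) := by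
    calc |d u₀| = c * |(W u₀)⁻¹ * ∑ w ∈ out u₀, weight u₀ w * (d w - p w)| := by
          rw [hd u₀, abs_mul, abs_of_nonneg hc0]
      _ ≤ c * (|d u₀| + δ) := by
          refine mul_le_mul_of_nonneg_left ?_ hc0
          rw [hW u₀]
          refine abs_inv_mul_sum_mul_le _ _ _ (hw u₀) (by positivity) fun w _ => ?_
          exact (abs_sub _ _).trans (add_le_add (hmax w (mem_univ w)) (hp w))
  nlinarith [hmax u (mem_univ u)]

theorem weighted_correctness_general
    {V : Type*} [Fintype V] [DecidableEq V]
    (out : V → Finset V)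
    (weight : V → V → ℝ) (hw : ∀ u w, w ∈ out u → 0 < weight u w)
    (W : V → ℝ) (hW : ∀ u, W u = ∑ w ∈ out u, weight u w)
    (α : ℝ) (hα : 0 < α) (hα1 : α < 1)
    (ε : ℝ)
    (v : V) (π : V → V → ℝ) (s p : V → ℝ)
    (hπ : ∀ u, π u v =
      (1 - α) * ((W u)⁻¹ * ∑ w ∈ out u, weight u w * π w v)
        + (if u = v then α else 0))
    (hs : ∀ u, s u =
      (1 - α) * ((W u)⁻¹ * ∑ w ∈ out u, weight u w * (s w - p w))
        + (if u = v then α else 0))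
    (hp : ∀ w, 0 ≤ p w ∧ p w < α * ε) :
    ∀ u, |s u - π u v| ≤ (1 - α) * ε := by
  intro u
  have herr : ∀ u, s u - π u v =
      (1 - α) * ((W u)⁻¹ * ∑ w ∈ out u, weight u w * ((s w - π w v) - p w)) := by
    intro u
    have hsplit : ∑ w ∈ out u, weight u w * ((s w - π w v) - p w)
        = ∑ w ∈ out u, weight u w * (s w - p w) - ∑ w ∈ out u, weight u w * π w v := by
      rw [← sum_sub_distrib]
      exact sum_congr rfl fun w _ => by ring
    rw [hsplit, hs u, hπ u]
    ring
  have hpα : ∀ w, |p w| ≤ α * ε := fun w => by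
    rw [abs_of_nonneg (hp w).1]
    exact (hp w).2.le
  have key := one_sub_mul_abs_le_of_eq_mul_weighted_avg out weight
    (fun u w h => (hw u w h).le) W hW (by linarith) (by linarith) _ p hpα herr u
  rw [sub_sub_cancel] at key
  nlinarith

/-- Weighted-graph generalization of the correctness theorem: if `s`
satisfies the perturbed weighted recurrence with residuals `0 ≤ p(w) < αε` and `π`
satisfies the exact weighted recurrence, then `max_u |s(u) - π(u,v)| ≤ (1-α)·ε`. -/
theorem weighted_correctness
    {V : Type*} [Fintype V] [Nonempty V] [DecidableEq V]
    (out : V → Finset V) (hout : ∀ u, (out u).Nonempty)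
    (weight : V → V → ℝ) (hw : ∀ u w, w ∈ out u → 0 < weight u w)
    (W : V → ℝ) (hW : ∀ u, W u = ∑ w ∈ out u, weight u w)
    (α : ℝ) (hα : 0 < α) (hα1 : α < 1)
    (ε : ℝ) (hε : 0 < ε)
    (v : V) (π : V → V → ℝ) (s p : V → ℝ)
    (hπ : ∀ u, π u v =
      (1 - α) * ((W u)⁻¹ * ∑ w ∈ out u, weight u w * π w v)
        + (if u = v then α else 0))
    (hs : ∀ u, s u =
      (1 - α) * ((W u)⁻¹ * ∑ w ∈ out u, weight u w * (s w - p w))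
        + (if u = v then α else 0))
    (hp : ∀ w, 0 ≤ p w ∧ p w < α * ε) :
    ∀ u, |s u - π u v| ≤ (1 - α) * ε :=
  weighted_correctness_general out weight hw W hW α hα hα1 ε v π s p hπ hs hp
end

section
/- If the simplified (non-priority-queue) variant of the algorithm repeatedly pops any node with residual p(u) > αε, then assuming each node u accumulates total priority at most π(u,v) over the run and each pop costs |in(u)| work, and Σ_v π(u,v) = 1 for each u, the total work over all n choices of target v is at most m/(αε), giving average per-target work (1/(αε))·(m/n). -/
open Finset

/-! Each pop of `u` in the run towards `v` uses up `αε` of `π(u,v)`, so over all targets `u` is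
popped at most `Σ_v π(u,v) / (αε) = 1/(αε)` times; weighting by the cost `|in(u)|` and summing
over `u` gives `m/(αε)`. -/

theorem sum_le_sum_div_of_mul_le {ι : Type*} (s : Finset ι) {c : ℝ} (hc : 0 < c)
    {k p : ι → ℝ} (h : ∀ i ∈ s, k i * c ≤ p i) :
    ∑ i ∈ s, k i ≤ (∑ i ∈ s, p i) / c := by
  rw [sum_div]
  exact sum_le_sum fun i hi => (le_div_iff₀ hc).2 (h i hi)

theorem sum_sum_mul_le_mul_sum_of_forall_sum_le {ι κ : Type*} (s : Finset ι) (t : Finset κ)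
    (w : κ → ℝ) (hw : ∀ j ∈ t, 0 ≤ w j) {k : ι → κ → ℝ} {B : ℝ}
    (hk : ∀ j ∈ t, ∑ i ∈ s, k i j ≤ B) :
    ∑ i ∈ s, ∑ j ∈ t, k i j * w j ≤ B * ∑ j ∈ t, w j := by
  rw [sum_comm, mul_sum]
  refine sum_le_sum fun j hj => ?_
  rw [← sum_mul]
  exact mul_le_mul_of_nonneg_right (hk j hj) (hw j hj)

theorem simplified_variant_average_work_general
    {V : Type*} [Fintype V]
    (indeg : V → ℕ)
    (n m : ℝ) (hn : n = (Fintype.card V : ℝ)) (hm : m = ∑ u : V, (indeg u : ℝ))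
    (π : V → V → ℝ) (hπ1 : ∀ u, ∑ v : V, π u v = 1)
    (α ε : ℝ) (hαε : 0 < α * ε)
    (pops : V → V → ℕ)  -- `pops v u` = number of pops of `u` in the run with target `v`
    (hconsume : ∀ v u, (pops v u : ℝ) * (α * ε) ≤ π u v) :
    (∑ v : V, ∑ u : V, (pops v u : ℝ) * (indeg u : ℝ)) ≤ m / (α * ε) ∧
    (1 / n) * (∑ v : V, ∑ u : V, (pops v u : ℝ) * (indeg u : ℝ))
      ≤ (1 / (α * ε)) * (m / n) := by
  have pops_total_le (u : V) : ∑ v : V, (pops v u : ℝ) ≤ 1 / (α * ε) := by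
    simpa only [hπ1 u] using sum_le_sum_div_of_mul_le univ hαε fun v _ => hconsume v u
  have work_le : (∑ v : V, ∑ u : V, (pops v u : ℝ) * (indeg u : ℝ)) ≤ m / (α * ε) := by
    calc _ ≤ 1 / (α * ε) * ∑ u : V, (indeg u : ℝ) :=
          sum_sum_mul_le_mul_sum_of_forall_sum_le univ univ _ (fun u _ => Nat.cast_nonneg _)
            fun u _ => pops_total_le u
      _ = m / (α * ε) := by rw [hm, one_div_mul_eq_div]
  refine ⟨work_le, ?_⟩
  have hn0 : 0 ≤ n := hn ▸ Nat.cast_nonneg _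
  calc _ ≤ 1 / n * (m / (α * ε)) := mul_le_mul_of_nonneg_left work_le (by positivity)
    _ = 1 / (α * ε) * (m / n) := by ring

/-- The simplified (non-priority-queue) variant: each pop of `u`
consumes at least `αε` of `u`'s accumulated priority, which over the whole run with
target `v` is at most `π(u,v)`, and popping `u` costs `|in(u)|` work.  Since
`Σ_v π(u,v) = 1`, the total work over all `n` targets is at most `m/(αε)` where
`m = Σ_u |in(u)|`, giving average per-target work `(1/(αε))·(m/n)`. -/
theorem simplified_variant_average_work
    {V : Type*} [Fintype V] [Nonempty V]
    (indeg : V → ℕ)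
    (n m : ℝ) (hn : n = (Fintype.card V : ℝ)) (hm : m = ∑ u : V, (indeg u : ℝ))
    (π : V → V → ℝ) (hπ0 : ∀ u v, 0 ≤ π u v) (hπ1 : ∀ u, ∑ v : V, π u v = 1)
    (α ε : ℝ) (hαε : 0 < α * ε)
    (pops : V → V → ℕ)  -- `pops v u` = number of pops of `u` in the run with target `v`
    (hconsume : ∀ v u, (pops v u : ℝ) * (α * ε) ≤ π u v) :
    (∑ v : V, ∑ u : V, (pops v u : ℝ) * (indeg u : ℝ)) ≤ m / (α * ε) ∧
    (1 / n) * (∑ v : V, ∑ u : V, (pops v u : ℝ) * (indeg u : ℝ))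
      ≤ (1 / (α * ε)) * (m / n) :=
  simplified_variant_average_work_general indeg n m hn hm π hπ1 α ε hαε pops hconsume
end
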